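/- arXiv:2406.06158 — 8 statements merged into one kernel-verified Lean document; each statement's English description precedes it below -/
import Mathlib

section
/- If a² > 0 and β = a w with δ = η_w a² - η_a‖w‖², then a² = (√(δ² + 4 η_a η_w ‖β‖²) + δ)/(2η_w) and w wᵀ = ((√(δ² + 4 η_a η_w ‖β‖²) - δ)/(2η_a)) · (β βᵀ / ‖β‖²). -/
/-! With `x = ηw a²` and `y = ηa ‖w‖²` we have `δ = x - y` and `ηa ηw ‖β‖² = x y`, so the square
root equals `x + y`; the two formulas then reduce to `a² = x / ηw` and to
`w wᵀ = (‖w‖² / ‖a w‖²) (a w)(a w)ᵀ`. -/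

open Matrix

lemma sqrt_sub_sq_add_four_mul_eq_add {x y : ℝ} (hx : 0 ≤ x) (hy : 0 ≤ y) :
    √((x - y) ^ 2 + 4 * x * y) = x + y := by
  rw [show (x - y) ^ 2 + 4 * x * y = (x + y) ^ 2 by ring]
  exact Real.sqrt_sq (add_nonneg hx hy)

lemma EuclideanSpace.vecMulVec_smul_smul {ι : Type*} (a : ℝ) (w : EuclideanSpace ℝ ι) :
    vecMulVec (fun i => (a • w) i) (fun i => (a • w) i)
      = a ^ 2 • vecMulVec (fun i => w i) (fun i => w i) := by
  ext i j
  simp only [vecMulVec_apply, PiLp.smul_apply, Matrix.smul_apply, smul_eq_mul]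
  ring

lemma EuclideanSpace.vecMulVec_self_eq_smul_of_smul {ι : Type*} [Fintype ι] {a : ℝ} (ha : a ≠ 0)
    (w : EuclideanSpace ℝ ι) :
    vecMulVec (fun i => w i) (fun i => w i)
      = (‖w‖ ^ 2 / ‖a • w‖ ^ 2) • vecMulVec (fun i => (a • w) i) (fun i => (a • w) i) := by
  obtain rfl | hw := eq_or_ne w 0
  · ext i j
    simp [vecMulVec_apply]
  have hcoeff : ‖w‖ ^ 2 / ‖a • w‖ ^ 2 * a ^ 2 = 1 := by
    rw [norm_smul, Real.norm_eq_abs, mul_pow, sq_abs]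
    field_simp
  rw [vecMulVec_smul_smul, smul_smul, hcoeff, one_smul]

theorem recover_a_sq_and_outer_general (d : ℕ) (a : ℝ) (ha : a ≠ 0)
    (w : EuclideanSpace ℝ (Fin d))
    (ηa ηw δ : ℝ) (hηa : 0 < ηa) (hηw : 0 < ηw)
    (β : EuclideanSpace ℝ (Fin d)) (hβ : β = a • w)
    (hδ : δ = ηw * a^2 - ηa * ‖w‖^2) :
    a^2 = (Real.sqrt (δ^2 + 4*ηa*ηw*‖β‖^2) + δ) / (2*ηw) ∧
    Matrix.vecMulVec (fun i => w i) (fun i => w i)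
      = (((Real.sqrt (δ^2 + 4*ηa*ηw*‖β‖^2) - δ) / (2*ηa)) / ‖β‖^2) •
        Matrix.vecMulVec (fun i => β i) (fun i => β i) := by
  subst hβ hδ
  have hβ_sq : ‖a • w‖ ^ 2 = a ^ 2 * ‖w‖ ^ 2 := by
    rw [norm_smul, mul_pow, Real.norm_eq_abs, sq_abs]
  have hS : √((ηw * a ^ 2 - ηa * ‖w‖ ^ 2) ^ 2 + 4 * ηa * ηw * ‖a • w‖ ^ 2)
      = ηw * a ^ 2 + ηa * ‖w‖ ^ 2 := by
    rw [hβ_sq]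
    convert sqrt_sub_sq_add_four_mul_eq_add (x := ηw * a ^ 2) (y := ηa * ‖w‖ ^ 2)
      (by positivity) (by positivity) using 2
    ring
  rw [hS]
  refine ⟨by field_simp; ring, ?_⟩
  convert EuclideanSpace.vecMulVec_self_eq_smul_of_smul ha w using 3
  field_simp
  ring

/-- Recovering a² and w wᵀ from β = a w and δ. -/
theorem recover_a_sq_and_outer (d : ℕ) (a : ℝ) (ha : a ≠ 0)
    (w : EuclideanSpace ℝ (Fin d)) (hw : w ≠ 0)
    (ηa ηw δ : ℝ) (hηa : 0 < ηa) (hηw : 0 < ηw)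
    (β : EuclideanSpace ℝ (Fin d)) (hβ : β = a • w)
    (hδ : δ = ηw * a^2 - ηa * ‖w‖^2) :
    a^2 = (Real.sqrt (δ^2 + 4*ηa*ηw*‖β‖^2) + δ) / (2*ηw) ∧
    Matrix.vecMulVec (fun i => w i) (fun i => w i)
      = (((Real.sqrt (δ^2 + 4*ηa*ηw*‖β‖^2) - δ) / (2*ηa)) / ‖β‖^2) •
        Matrix.vecMulVec (fun i => β i) (fun i => β i) :=
  recover_a_sq_and_outer_general d a ha w ηa ηw δ hηa hηw β hβ hδ
end

section
/- Under the above conditions, the matrix M = η_w a² I_d + η_a w wᵀ equals ((κ + δ)/2) I_d + ((κ - δ)/2) (β βᵀ/‖β‖²), where κ = √(δ² + 4 η_a η_w ‖β‖²). -/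
/-- M = η_w a² I + η_a w wᵀ = ((κ+δ)/2) I + ((κ-δ)/2) ββᵀ/‖β‖². -/
theorem preconditioner_in_terms_of_beta (d : ℕ) (a : ℝ) (ha : a ≠ 0)
    (w : EuclideanSpace ℝ (Fin d)) (hw : w ≠ 0)
    (ηa ηw δ κ : ℝ) (hηa : 0 < ηa) (hηw : 0 < ηw)
    (β : EuclideanSpace ℝ (Fin d)) (hβ : β = a • w)
    (hδ : δ = ηw * a^2 - ηa * ‖w‖^2)
    (hκ : κ = Real.sqrt (δ^2 + 4*ηa*ηw*‖β‖^2))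
    (M : Matrix (Fin d) (Fin d) ℝ)
    (hM : M = (ηw * a^2) • (1 : Matrix (Fin d) (Fin d) ℝ)
        + ηa • Matrix.vecMulVec (fun i => w i) (fun i => w i)) :
    M = ((κ + δ)/2) • (1 : Matrix (Fin d) (Fin d) ℝ)
        + (((κ - δ)/2) / ‖β‖^2) • Matrix.vecMulVec (fun i => β i) (fun i => β i) := by
  have hwnorm : (0:ℝ) < ‖w‖ := norm_pos_iff.mpr hw
  have hβnorm : ‖β‖^2 = a^2 * ‖w‖^2 := by
    rw [hβ, norm_smul, mul_pow, Real.norm_eq_abs, sq_abs]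
  have hs : (0:ℝ) < ηw * a^2 + ηa * ‖w‖^2 := by positivity
  have hκval : κ = ηw * a^2 + ηa * ‖w‖^2 := by
    rw [hκ, hβnorm, hδ]
    have : (ηw * a^2 - ηa * ‖w‖^2)^2 + 4*ηa*ηw*(a^2*‖w‖^2)
        = (ηw * a^2 + ηa * ‖w‖^2)^2 := by ring
    rw [this, Real.sqrt_sq hs.le]
  have hc1 : (κ + δ)/2 = ηw * a^2 := by rw [hκval, hδ]; ring
  have hvv : Matrix.vecMulVec (fun i => β i) (fun i => β i)
      = (a^2) • Matrix.vecMulVec (fun i => w i) (fun i => w i) := by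
    ext i j
    simp [Matrix.vecMulVec_apply, hβ, PiLp.smul_apply, smul_eq_mul]
    ring
  have hc2 : (((κ - δ)/2) / ‖β‖^2) * a^2 = ηa := by
    rw [hκval, hδ, hβnorm]
    field_simp
    ring
  rw [hM, hc1, hvv, smul_smul, hc2]
end

section
/- For d ≥ 2, the matrix field β ↦ M(β)⁻¹ = f_δ(‖β‖²) I_d - h_δ(‖β‖²) β βᵀ, with f_δ(x) = 2/(√(δ²+4x)+δ) and h_δ(x) = (√(δ²+4x)-δ)/(x√(δ²+4x)(√(δ²+4x)+δ)), is not the Hessian of any C³ scalar potential on ℝ^d \ {0}; indeed the symmetry-of-mixed-partials condition fails because 2 f_δ'(x) + h_δ(x) = -4/(√(δ²+4x)(√(δ²+4x)+δ)²) ≠ 0. -/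
/-!
If `Φ` has Hessian `f(‖β‖²) δᵢⱼ - h(‖β‖²) βᵢ βⱼ` away from the origin, then `∂ⱼΦ` is `C²` there, so
`∂ᵢ (∂ⱼ ∂ⱼ Φ) = ∂ⱼ (∂ᵢ ∂ⱼ Φ)` for `i ≠ j`. At `β = r eᵢ` the left side is the derivative of
`t ↦ f ((r + t)²)`, namely `2 r f'(r²)`, and the right side is the derivative of
`t ↦ -t h (r² + t²) r`, namely `-h(r²) r`; hence `2 f' + h = 0` on `(0, ∞)`.
For `f_δ` and `h_δ` one computes `f_δ' = -h_δ = -4 / (√(δ² + 4x) (√(δ² + 4x) + δ)²)`,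
so `2 f_δ' + h_δ < 0`.
-/

open Real

section Scalar

variable {δ x : ℝ}

lemma sqrt_sq_add_four_mul_add_pos (hx : 0 < x) : 0 < √(δ ^ 2 + 4 * x) + δ := by
  have : |δ| < √(δ ^ 2 + 4 * x) := by
    rw [← sqrt_sq_eq_abs]
    exact sqrt_lt_sqrt (sq_nonneg δ) (by linarith)
  linarith [neg_abs_le δ]

lemma sqrt_mul_sqrt_add_sq_pos (hx : 0 < x) :
    0 < √(δ ^ 2 + 4 * x) * (√(δ ^ 2 + 4 * x) + δ) ^ 2 :=
  mul_pos (sqrt_pos.2 (by positivity)) (pow_pos (sqrt_sq_add_four_mul_add_pos hx) 2)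

lemma hasDerivAt_two_div_sqrt_sq_add_four_mul_add (hx : 0 < x) :
    HasDerivAt (fun y => 2 / (√(δ ^ 2 + 4 * y) + δ))
      (-4 / (√(δ ^ 2 + 4 * x) * (√(δ ^ 2 + 4 * x) + δ) ^ 2)) x := by
  have hSδ := sqrt_sq_add_four_mul_add_pos (δ := δ) hx
  have hlin : HasDerivAt (fun y : ℝ => δ ^ 2 + 4 * y) 4 x := by
    simpa using ((hasDerivAt_id x).const_mul (4 : ℝ)).const_add (δ ^ 2)
  refine ((hasDerivAt_const x (2 : ℝ)).div ((hlin.sqrt (by positivity)).add_const δ)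
    hSδ.ne').congr_deriv ?_
  field_simp
  ring

lemma sqrt_sub_div_eq_four_div (hx : 0 < x) :
    (√(δ ^ 2 + 4 * x) - δ) / (x * √(δ ^ 2 + 4 * x) * (√(δ ^ 2 + 4 * x) + δ))
      = 4 / (√(δ ^ 2 + 4 * x) * (√(δ ^ 2 + 4 * x) + δ) ^ 2) := by
  have hSδ := sqrt_sq_add_four_mul_add_pos (δ := δ) hx
  have hsq : √(δ ^ 2 + 4 * x) ^ 2 = δ ^ 2 + 4 * x := sq_sqrt (by positivity)
  rw [div_eq_div_iff (by positivity) (by positivity)]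
  linear_combination (√(δ ^ 2 + 4 * x) * (√(δ ^ 2 + 4 * x) + δ)) * hsq

lemma continuousAt_sqrt_sub_div (hx : 0 < x) :
    ContinuousAt (fun y => (√(δ ^ 2 + 4 * y) - δ) /
      (y * √(δ ^ 2 + 4 * y) * (√(δ ^ 2 + 4 * y) + δ))) x := by
  have hSδ := sqrt_sq_add_four_mul_add_pos (δ := δ) hx
  exact ContinuousAt.div (by fun_prop) (by fun_prop) (by positivity)

end Scalar

lemma hasDerivAt_mul_id_of_continuousAt {c : ℝ → ℝ} (hc : ContinuousAt c 0) :
    HasDerivAt (fun t => t * c t) (c 0) 0 := by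
  rw [hasDerivAt_iff_tendsto_slope_zero]
  refine (hc.tendsto.mono_left nhdsWithin_le_nhds).congr' ?_
  filter_upwards [self_mem_nhdsWithin] with t (ht : t ≠ 0)
  rw [zero_mul, sub_zero, smul_eq_mul, zero_add, inv_mul_cancel_left₀ ht]

lemma fderiv_fderiv_apply_comm {E F : Type*} [NormedAddCommGroup E] [NormedSpace ℝ E]
    [NormedAddCommGroup F] [NormedSpace ℝ F] {g : E → F} {x : E}
    (hg : ContDiffAt ℝ 2 g x) (u v : E) :
    fderiv ℝ (fun y => fderiv ℝ g y u) x v = fderiv ℝ (fun y => fderiv ℝ g y v) x u := by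
  have hdiff : DifferentiableAt ℝ (fderiv ℝ g) x :=
    (hg.fderiv_right le_rfl).differentiableAt one_ne_zero
  rw [fderiv_clm_apply hdiff (differentiableAt_const u),
    fderiv_clm_apply hdiff (differentiableAt_const v)]
  simpa using hg.isSymmSndFDerivAt (by simp) v u

section RadialField

variable {ι : Type*} [Fintype ι] [DecidableEq ι]

noncomputable def radialField (f h : ℝ → ℝ) (β : EuclideanSpace ℝ ι) (i j : ι) : ℝ :=
  f (‖β‖ ^ 2) * (if i = j then 1 else 0) - h (‖β‖ ^ 2) * (β i * β j)

lemma norm_smul_single_add_smul_single_sq {i j : ι} (hij : i ≠ j) (a b : ℝ) :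
    ‖a • EuclideanSpace.single i (1 : ℝ) + b • EuclideanSpace.single j 1‖ ^ 2
      = a ^ 2 + b ^ 2 := by
  have horth :
      inner ℝ (a • EuclideanSpace.single i (1 : ℝ)) (b • EuclideanSpace.single j 1) = 0 := by
    simp [real_inner_smul_left, real_inner_smul_right, EuclideanSpace.inner_single_left, hij.symm]
  rw [norm_add_sq_real, horth, norm_smul, norm_smul]
  simp

theorem two_mul_deriv_add_eq_zero_of_fderiv_fderiv_eq_radialField
    {Φ : EuclideanSpace ℝ ι → ℝ} {f h : ℝ → ℝ} (hΦ : ContDiffOn ℝ 3 Φ {β | β ≠ 0})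
    (hH : ∀ β : EuclideanSpace ℝ ι, β ≠ 0 → ∀ i j,
      fderiv ℝ (fun b => fderiv ℝ Φ b (EuclideanSpace.single i 1)) β
        (EuclideanSpace.single j 1) = radialField f h β i j)
    {i j : ι} (hij : i ≠ j) {r : ℝ} (hr : r ≠ 0)
    (hf : DifferentiableAt ℝ f (r ^ 2)) (hh : ContinuousAt h (r ^ 2)) :
    2 * deriv f (r ^ 2) + h (r ^ 2) = 0 := by
  set eᵢ : EuclideanSpace ℝ ι := EuclideanSpace.single i 1
  set eⱼ : EuclideanSpace ℝ ι := EuclideanSpace.single j 1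
  set g := fun b => fderiv ℝ Φ b eⱼ
  have hg : ContDiffAt ℝ 2 g (r • eᵢ) := by
    have hΦ3 : ContDiffAt ℝ 3 Φ (r • eᵢ) :=
      hΦ.contDiffAt (isOpen_ne.mem_nhds (smul_ne_zero hr (by simp [eᵢ])))
    exact (hΦ3.fderiv_right le_rfl).clm_apply contDiffAt_const
  have hdiff (v) : DifferentiableAt ℝ (fun b => fderiv ℝ g b v) (r • eᵢ) :=
    ((hg.fderiv_right le_rfl).clm_apply contDiffAt_const).differentiableAt one_ne_zero
  have hii : HasDerivAt (fun t : ℝ => fderiv ℝ g (r • eᵢ + t • eᵢ) eⱼ)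
      (deriv f (r ^ 2) * (2 * r)) 0 := by
    have hsq : HasDerivAt (fun t : ℝ => (r + t) ^ 2) (2 * r) 0 := by
      simpa using ((hasDerivAt_id (0 : ℝ)).const_add r).fun_pow 2
    refine (hf.hasDerivAt.comp_of_eq 0 hsq (by simp)).congr_of_eventuallyEq ?_
    filter_upwards [((continuous_const_add r).tendsto 0).eventually_ne (by simpa using hr)]
      with t ht
    have hline : r • eᵢ + t • eᵢ = (r + t) • eᵢ + (0 : ℝ) • eⱼ := by
      rw [add_smul, zero_smul, add_zero]
    rw [hline, hH _ (by simpa [hline, eᵢ] using ht) j j, radialField,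
      norm_smul_single_add_smul_single_sq hij]
    simp [eᵢ, eⱼ, hij.symm]
  have hji : HasDerivAt (fun t : ℝ => fderiv ℝ g (r • eᵢ + t • eⱼ) eᵢ) (-(h (r ^ 2) * r)) 0 := by
    have hc : ContinuousAt (fun t : ℝ => h (r ^ 2 + t ^ 2) * r) 0 :=
      (hh.comp_of_eq (by fun_prop) (by simp)).mul continuousAt_const
    have hline (t : ℝ) : fderiv ℝ g (r • eᵢ + t • eⱼ) eᵢ = -(t * (h (r ^ 2 + t ^ 2) * r)) := by
      have hne : r • eᵢ + t • eⱼ ≠ 0 := fun h0 => by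
        simpa [eᵢ, eⱼ, hij, hr] using congrArg (· i) h0
      rw [hH _ hne j i, radialField, norm_smul_single_add_smul_single_sq hij]
      simp [eᵢ, eⱼ, hij, hij.symm, mul_left_comm]
    simp_rw [hline]
    exact (hasDerivAt_mul_id_of_continuousAt hc).neg.congr_deriv (by simp)
  have hsymm := fderiv_fderiv_apply_comm hg eᵢ eⱼ
  rw [← (hdiff eᵢ).lineDeriv_eq_fderiv, ← (hdiff eⱼ).lineDeriv_eq_fderiv,
    HasLineDerivAt.lineDeriv (f := fun b => fderiv ℝ g b eᵢ) hji,
    HasLineDerivAt.lineDeriv (f := fun b => fderiv ℝ g b eⱼ) hii] at hsymm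
  apply mul_left_cancel₀ hr
  linear_combination -hsymm

end RadialField

/-- M⁻¹ = f_δ(‖β‖²) I - h_δ(‖β‖²) ββᵀ is not a Hessian map on ℝ^d \ {0} for d ≥ 2,
because 2 f_δ' + h_δ = -4/(√(δ²+4x)(√(δ²+4x)+δ)²) ≠ 0. -/
theorem Minv_not_hessian_map (d : ℕ) (hd : 2 ≤ d) (δ : ℝ) (f h : ℝ → ℝ)
    (hf : ∀ x, f x = 2 / (Real.sqrt (δ^2 + 4*x) + δ))
    (hh : ∀ x, h x = (Real.sqrt (δ^2 + 4*x) - δ) /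
        (x * Real.sqrt (δ^2 + 4*x) * (Real.sqrt (δ^2 + 4*x) + δ))) :
    (∀ x > 0, 2 * deriv f x + h x
        = -4 / (Real.sqrt (δ^2 + 4*x) * (Real.sqrt (δ^2 + 4*x) + δ)^2) ∧
        2 * deriv f x + h x ≠ 0) ∧
    ¬ ∃ Φ : EuclideanSpace ℝ (Fin d) → ℝ,
      ContDiffOn ℝ 3 Φ {β : EuclideanSpace ℝ (Fin d) | β ≠ 0} ∧
      ∀ β : EuclideanSpace ℝ (Fin d), β ≠ 0 → ∀ i j : Fin d,
        fderiv ℝ (fun b => fderiv ℝ Φ b (EuclideanSpace.single i 1)) β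
            (EuclideanSpace.single j 1)
          = f (‖β‖^2) * (if i = j then (1:ℝ) else 0) - h (‖β‖^2) * (β i * β j) := by
  have hderiv (x : ℝ) (hx : 0 < x) :
      deriv f x = -4 / (√(δ ^ 2 + 4 * x) * (√(δ ^ 2 + 4 * x) + δ) ^ 2) := by
    rw [funext hf]
    exact (hasDerivAt_two_div_sqrt_sq_add_four_mul_add hx).deriv
  have hsum (x : ℝ) (hx : 0 < x) : 2 * deriv f x + h x
      = -4 / (√(δ ^ 2 + 4 * x) * (√(δ ^ 2 + 4 * x) + δ) ^ 2) := by
    rw [hderiv x hx, hh, sqrt_sub_div_eq_four_div hx]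
    ring
  have hsum_ne (x : ℝ) (hx : 0 < x) : 2 * deriv f x + h x ≠ 0 := by
    rw [hsum x hx]
    exact div_ne_zero (by norm_num) (sqrt_mul_sqrt_add_sq_pos hx).ne'
  refine ⟨fun x hx => ⟨hsum x hx, hsum_ne x hx⟩, ?_⟩
  rintro ⟨Φ, hΦ, hH⟩
  have hf₁ : DifferentiableAt ℝ f (1 ^ 2) := by
    rw [funext hf, one_pow]
    exact (hasDerivAt_two_div_sqrt_sq_add_four_mul_add one_pos).differentiableAt
  have hh₁ : ContinuousAt h (1 ^ 2) := by
    rw [funext hh, one_pow]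
    exact continuousAt_sqrt_sub_div one_pos
  have h01 : (⟨0, by omega⟩ : Fin d) ≠ ⟨1, by omega⟩ := by simp
  have := two_mul_deriv_add_eq_zero_of_fderiv_fderiv_eq_radialField hΦ hH h01 one_ne_zero hf₁ hh₁
  exact hsum_ne 1 one_pos (by simpa using this)
end

section
/- Consider the planar ODE system da/dt = ω - a(a² - δ), dω/dt = a‖β*‖² - a²ω. The open positive orthant O⁺ = {(a,ω) : a > 0, ω > 0} and the open negative orthant O⁻ = {(a,ω) : a < 0, ω < 0} are positively invariant sets; consequently, if (a(0), ω(0)) ≠ (0,0), then the product a(t)·ω(t) changes sign at most once for t ≥ 0. -/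
/-!
Along a trajectory, the product `a * ω` has derivative `ω ^ 2` where `a = 0` and `a ^ 2 * b ^ 2`
where `ω = 0`, so it is strictly increasing through each of its zeros other than the origin. The
origin is an equilibrium of a locally Lipschitz field, hence unreachable from any other point.
So once `a * ω ≥ 0`, it is positive at all later times: this gives the single crossing, and,
together with the intermediate value theorem for `a`, the invariance of the positive orthant.
The symmetry `(a, ω) ↦ (-a, -ω)` of the system carries it over to the negative orthant.
-/

open Set Filter Topology

theorem eventually_neg_nhdsLT_of_hasDerivAt_pos {f : ℝ → ℝ} {d t : ℝ}
    (hf : HasDerivAt f d t) (hd : 0 < d) (ht : f t = 0) : ∀ᶠ r in 𝓝[<] t, f r < 0 := by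
  have hslope := (hasDerivAt_iff_tendsto_slope.mp hf).eventually (eventually_gt_nhds hd)
  filter_upwards [nhdsLT_le_nhdsNE t hslope, self_mem_nhdsWithin] with r hr hrt
  exact neg_of_slope_pos hrt hr ht

theorem pos_of_nonneg_of_deriv_pos_at_zeros {F F' : ℝ → ℝ} {s t : ℝ}
    (hF : ∀ r, HasDerivAt F (F' r) r) (hzeros : ∀ r ∈ Icc s t, F r = 0 → 0 < F' r)
    (hs : 0 ≤ F s) (hst : s < t) : 0 < F t := by
  have hnonneg : ∀ r ∈ Icc s t, 0 ≤ F r := by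
    have := image_le_of_deriv_right_lt_deriv_boundary' (f := fun r => -F r) (f' := fun r => -F' r)
      (B := 0) (B' := 0) (fun r _ => (hF r).continuousAt.neg.continuousWithinAt)
      (fun r _ => (hF r).neg.hasDerivWithinAt) (by simpa using hs) continuousOn_const
      (fun r _ => hasDerivWithinAt_const r _ 0)
      (fun r hr hr0 => by simpa using hzeros r (Ico_subset_Icc_self hr) (by simpa using hr0))
    exact fun r hr => by simpa using this hr
  refine (hnonneg t (right_mem_Icc.2 hst.le)).lt_of_ne' fun ht => ?_
  obtain ⟨r, hr_neg, hr_mem⟩ := ((eventually_neg_nhdsLT_of_hasDerivAt_pos (hF t)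
    (hzeros t (right_mem_Icc.2 hst.le) ht) ht).and (Ioo_mem_nhdsLT hst)).exists
  exact (hnonneg r (Ioo_subset_Icc_self hr_mem)).not_gt hr_neg

theorem ODE_solution_eq_of_eq_equilibrium {E : Type*} [NormedAddCommGroup E] [NormedSpace ℝ E]
    {v : E → E} (hv : LocallyLipschitz v) {x₀ : E} (hx₀ : v x₀ = 0) {γ : ℝ → E}
    (hγ : ∀ t, HasDerivAt γ (v (γ t)) t) {s t : ℝ} (hst : s ≤ t) (ht : γ t = x₀) :
    γ s = x₀ := by
  have hγc : Continuous γ := continuous_iff_continuousAt.2 fun r => (hγ r).continuousAt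
  obtain ⟨K, hK⟩ := hv.locallyLipschitzOn.exists_lipschitzOnWith_of_compact
    ((isCompact_Icc (a := s) (b := t)).image hγc)
  have hx₀_mem : x₀ ∈ γ '' Icc s t := ⟨t, right_mem_Icc.2 hst, ht⟩
  refine ODE_solution_unique_of_mem_Icc_left (v := fun _ => v) (s := fun _ => γ '' Icc s t)
    (g := fun _ => x₀) (fun _ _ => hK) hγc.continuousOn (fun r _ => (hγ r).hasDerivWithinAt)
    (fun r hr => mem_image_of_mem γ (Ioc_subset_Icc_self hr)) continuousOn_const
    (fun r _ => by simpa [hx₀] using hasDerivWithinAt_const r (Iic r) x₀) (fun _ _ => hx₀_mem)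
    ht (left_mem_Icc.2 hst)

section

variable {δ b : ℝ} {a ω : ℝ → ℝ} {s t : ℝ}

theorem mul_deriv_pos_of_mul_eq_zero (hb : b ≠ 0) {x y : ℝ} (hxy : x * y = 0)
    (hne : (x, y) ≠ (0, 0)) :
    0 < (y - x * (x ^ 2 - δ)) * y + x * (x * b ^ 2 - x ^ 2 * y) := by
  rcases mul_eq_zero.1 hxy with rfl | rfl
  · have : y ≠ 0 := fun hy => hne (by rw [hy])
    ring_nf
    positivity
  · have : x ≠ 0 := fun hx => hne (by rw [hx])
    ring_nf
    positivity

theorem trajectory_ne_origin (ha : ∀ t, HasDerivAt a (ω t - a t * ((a t)^2 - δ)) t)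
    (hω : ∀ t, HasDerivAt ω (a t * b^2 - (a t)^2 * ω t) t) (hst : s ≤ t)
    (hs : (a s, ω s) ≠ (0, 0)) : (a t, ω t) ≠ (0, 0) := fun ht =>
  hs <| ODE_solution_eq_of_eq_equilibrium
    (v := fun p : ℝ × ℝ => (p.2 - p.1 * (p.1 ^ 2 - δ), p.1 * b ^ 2 - p.1 ^ 2 * p.2))
    (by fun_prop : ContDiff ℝ 1 _).locallyLipschitz (by simp) (γ := fun t => (a t, ω t))
    (fun t => (ha t).prodMk (hω t)) hst ht

theorem trajectory_mul_pos (hb : b ≠ 0)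
    (ha : ∀ t, HasDerivAt a (ω t - a t * ((a t)^2 - δ)) t)
    (hω : ∀ t, HasDerivAt ω (a t * b^2 - (a t)^2 * ω t) t) (hs : (a s, ω s) ≠ (0, 0))
    (hs₀ : 0 ≤ a s * ω s) (hst : s < t) : 0 < a t * ω t :=
  pos_of_nonneg_of_deriv_pos_at_zeros (F := a * ω) (fun r => (ha r).mul (hω r))
    (fun _ hr hr₀ => mul_deriv_pos_of_mul_eq_zero hb hr₀ (trajectory_ne_origin ha hω hr.1 hs))
    hs₀ hst

theorem trajectory_pos_of_pos (hb : b ≠ 0)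
    (ha : ∀ t, HasDerivAt a (ω t - a t * ((a t)^2 - δ)) t)
    (hω : ∀ t, HasDerivAt ω (a t * b^2 - (a t)^2 * ω t) t) (hst : s ≤ t) (has : 0 < a s)
    (hωs : 0 < ω s) : 0 < a t ∧ 0 < ω t := by
  have hs : (a s, ω s) ≠ (0, 0) := fun h => has.ne' (congrArg Prod.fst h)
  have hmul : ∀ r ∈ Icc s t, 0 < a r * ω r := fun r hr =>
    hr.1.eq_or_lt.elim (fun h => h ▸ mul_pos has hωs)
      (trajectory_mul_pos hb ha hω hs (mul_pos has hωs).le)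
  have hat : 0 < a t := by
    by_contra! hat
    have ha_cont : Continuous a := continuous_iff_continuousAt.2 fun r => (ha r).continuousAt
    obtain ⟨r, hr, har⟩ := intermediate_value_Icc' hst ha_cont.continuousOn ⟨hat, has.le⟩
    simpa [har] using hmul r hr
  exact ⟨hat, pos_of_mul_pos_right (hmul t (right_mem_Icc.2 hst)) hat.le⟩

theorem trajectory_neg_of_neg (hb : b ≠ 0)
    (ha : ∀ t, HasDerivAt a (ω t - a t * ((a t)^2 - δ)) t)
    (hω : ∀ t, HasDerivAt ω (a t * b^2 - (a t)^2 * ω t) t) (hst : s ≤ t) (has : a s < 0)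
    (hωs : ω s < 0) : a t < 0 ∧ ω t < 0 := by
  have hna : ∀ t, HasDerivAt (-a) ((-ω) t - (-a) t * (((-a) t)^2 - δ)) t := fun t =>
    (ha t).neg.congr_deriv (by simp only [Pi.neg_apply]; ring)
  have hnω : ∀ t, HasDerivAt (-ω) ((-a) t * b^2 - ((-a) t)^2 * (-ω) t) t := fun t =>
    (hω t).neg.congr_deriv (by simp only [Pi.neg_apply]; ring)
  simpa using trajectory_pos_of_pos hb hna hnω hst (neg_pos.2 has) (neg_pos.2 hωs)

end

/-- The open positive and negative orthants are positively invariant for the planar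
system a' = ω - a(a²-δ), ω' = a‖β*‖² - a²ω; consequently, away from the origin,
a(t)ω(t) = 0 has at most one solution for t ≥ 0. -/
theorem orthant_invariance_and_single_crossing (δ b : ℝ) (hb : 0 < b)
    (a ω : ℝ → ℝ)
    (ha : ∀ t, HasDerivAt a (ω t - a t * ((a t)^2 - δ)) t)
    (hω : ∀ t, HasDerivAt ω (a t * b^2 - (a t)^2 * ω t) t) :
    (∀ s t : ℝ, s ≤ t → (0 < a s ∧ 0 < ω s) → (0 < a t ∧ 0 < ω t)) ∧
    (∀ s t : ℝ, s ≤ t → (a s < 0 ∧ ω s < 0) → (a t < 0 ∧ ω t < 0)) ∧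
    ((a 0, ω 0) ≠ ((0 : ℝ), (0 : ℝ)) →
      {t : ℝ | 0 ≤ t ∧ a t * ω t = 0}.Subsingleton) := by
  refine ⟨fun s t hst h => trajectory_pos_of_pos hb.ne' ha hω hst h.1 h.2,
    fun s t hst h => trajectory_neg_of_neg hb.ne' ha hω hst h.1 h.2, fun h₀ => ?_⟩
  have hno_later_zero : ∀ x y, 0 ≤ x → a x * ω x = 0 → x < y → a y * ω y ≠ 0 :=
    fun x y hx hxz hxy => (trajectory_mul_pos hb.ne' ha hω
      (trajectory_ne_origin ha hω hx h₀) hxz.ge hxy).ne'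
  intro x ⟨hx, hxz⟩ y ⟨hy, hyz⟩
  by_contra hxy
  rcases lt_or_gt_of_ne hxy with hlt | hlt
  · exact hno_later_zero x y hx hxz hlt hyz
  · exact hno_later_zero y x hy hyz hlt hxz
end

section
/- For the two-layer linear network gradient flow dA/dt = -η_a W Xᵀ(Xβ - Y), dWᵀ/dt = -η_w Xᵀ(Xβ - Y)Aᵀ with β = WᵀA, the h × h matrix Δ = η_w A Aᵀ - η_a W Wᵀ is conserved along the flow. -/
open Matrix

/-!
Differentiating, `d/dt (A Aᵀ) = A' Aᵀ + A A'ᵀ` and `d/dt (W Wᵀ) = W' Wᵀ + W W'ᵀ`. With the residual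
`R = Xβ - Y`, the flow gives `A' = -η_a W Xᵀ R` and `W' = -η_w A Rᵀ X`, so both `η_w d/dt (A Aᵀ)` and
`η_a d/dt (W Wᵀ)` equal `-η_a η_w (W Xᵀ R Aᵀ + A Rᵀ X Wᵀ)`: the two layers exchange exactly the
same symmetric matrix, and the derivative of `Δ` vanishes.
-/

section EntrywiseCalculus

variable {m k p : Type*} [Fintype k]

theorem hasDerivAt_mul_apply {M : ℝ → Matrix m k ℝ} {N : ℝ → Matrix k p ℝ}
    {M' : Matrix m k ℝ} {N' : Matrix k p ℝ} {t : ℝ}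
    (hM : ∀ i j, HasDerivAt (fun s => M s i j) (M' i j) t)
    (hN : ∀ i j, HasDerivAt (fun s => N s i j) (N' i j) t) (i : m) (j : p) :
    HasDerivAt (fun s => (M s * N s) i j) ((M' * N t + M t * N') i j) t := by
  simp only [mul_apply, Matrix.add_apply, ← Finset.sum_add_distrib]
  exact HasDerivAt.fun_sum fun l _ => (hM i l).mul (hN l j)

theorem hasDerivAt_mul_transpose_self_apply {M : ℝ → Matrix m k ℝ} {M' : Matrix m k ℝ}
    {t : ℝ} (hM : ∀ i j, HasDerivAt (fun s => M s i j) (M' i j) t) (i j : m) :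
    HasDerivAt (fun s => (M s * (M s)ᵀ) i j) ((M' * (M t)ᵀ + M t * M'ᵀ) i j) t :=
  hasDerivAt_mul_apply hM (fun a b => hM b a) i j

end EntrywiseCalculus

theorem balancing_derivative_eq_zero {α h d c n : Type*} [CommRing α]
    [Fintype d] [Fintype c] [Fintype n] (ηa ηw : α) (X : Matrix n d α) (R : Matrix n c α)
    (W : Matrix h d α) (A : Matrix h c α) :
    let A' := -ηa • (W * (Xᵀ * R))
    let W' := -ηw • (A * Rᵀ * X)
    ηw • (A' * Aᵀ + A * A'ᵀ) - ηa • (W' * Wᵀ + W * W'ᵀ) = 0 := by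
  simp only [Matrix.smul_mul, Matrix.mul_smul, transpose_smul, transpose_mul, transpose_transpose,
    smul_add, smul_smul, Matrix.mul_assoc]
  rw [mul_neg, mul_neg, mul_comm ηa ηw]
  abel

theorem conserved_Delta_wide_general (h d c n : ℕ)
    (X : Matrix (Fin n) (Fin d) ℝ) (Y : Matrix (Fin n) (Fin c) ℝ)
    (ηa ηw : ℝ)
    (W : ℝ → Matrix (Fin h) (Fin d) ℝ) (A : ℝ → Matrix (Fin h) (Fin c) ℝ)
    (hA : ∀ t i j, HasDerivAt (fun s => A s i j)
      ((-ηa • (W t * (Xᵀ * (X * ((W t)ᵀ * A t) - Y)))) i j) t)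
    (hW : ∀ t i j, HasDerivAt (fun s => W s i j)
      ((-ηw • (A t * (X * ((W t)ᵀ * A t) - Y)ᵀ * X)) i j) t) :
    ∀ t i j, HasDerivAt (fun s => (ηw • (A s * (A s)ᵀ) - ηa • (W s * (W s)ᵀ)) i j) 0 t := by
  intro t i j
  have hDelta := ((hasDerivAt_mul_transpose_self_apply (hA t) i j).const_mul ηw).sub
    ((hasDerivAt_mul_transpose_self_apply (hW t) i j).const_mul ηa)
  have hzero := congrFun (congrFun
    (balancing_derivative_eq_zero ηa ηw X (X * ((W t)ᵀ * A t) - Y) (W t) (A t)) i) j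
  simp only [Matrix.sub_apply, Matrix.smul_apply, smul_eq_mul, Matrix.zero_apply] at hzero ⊢
  rwa [hzero] at hDelta

/-- Δ = η_w A Aᵀ - η_a W Wᵀ is conserved along the two-layer linear network flow. -/
theorem conserved_Delta_wide (h d c n : ℕ)
    (X : Matrix (Fin n) (Fin d) ℝ) (Y : Matrix (Fin n) (Fin c) ℝ)
    (ηa ηw : ℝ) (hηa : 0 < ηa) (hηw : 0 < ηw)
    (W : ℝ → Matrix (Fin h) (Fin d) ℝ) (A : ℝ → Matrix (Fin h) (Fin c) ℝ)
    (hA : ∀ t i j, HasDerivAt (fun s => A s i j)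
      ((-ηa • (W t * (Xᵀ * (X * ((W t)ᵀ * A t) - Y)))) i j) t)
    (hW : ∀ t i j, HasDerivAt (fun s => W s i j)
      ((-ηw • (A t * (X * ((W t)ᵀ * A t) - Y)ᵀ * X)) i j) t) :
    ∀ t i j, HasDerivAt (fun s => (ηw • (A s * (A s)ᵀ) - ηa • (W s * (W s)ᵀ)) i j) 0 t :=
  conserved_Delta_wide_general h d c n X Y ηa ηw W A hA hW
end

section
/- Under gradient flow of a two-layer linear network, the product β = WᵀA evolves according to vec(dβ/dt) = -(η_w AᵀA ⊕ η_a WᵀW) vec(XᵀXβ - XᵀY), where ⊕ is the Kronecker sum C ⊕ D = C ⊗ I_d + I_c ⊗ D. -/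
/-!
By the product rule, `β̇ = ẆᵀA + WᵀȦ = -(G (η_w AᵀA) + (η_a WᵀW) G)` with `G = Xᵀ(Xβ - Y)`,
and the Sylvester-type map `G ↦ G Cᵀ + D G` is, after vectorization, multiplication by the
Kronecker sum `C ⊕ D`.
-/

open Matrix Kronecker

namespace Matrix

variable {R 𝕜 l m n : Type*}

theorem kronecker_one_add_one_kronecker_mulVec_vec [CommSemiring R] [Fintype m] [Fintype n]
    [DecidableEq m] [DecidableEq n] (C : Matrix n n R) (D : Matrix m m R) (G : Matrix m n R) :
    (C ⊗ₖ (1 : Matrix m m R) + (1 : Matrix n n R) ⊗ₖ D) *ᵥ vec G = vec (G * Cᵀ + D * G) := by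
  rw [add_mulVec, kronecker_mulVec_vec, kronecker_mulVec_vec, transpose_one, Matrix.mul_one,
    Matrix.one_mul, vec_add]

theorem hasDerivAt_mul_apply [NontriviallyNormedField 𝕜] [Fintype m]
    {P : 𝕜 → Matrix l m 𝕜} {Q : 𝕜 → Matrix m n 𝕜} {P' : Matrix l m 𝕜} {Q' : Matrix m n 𝕜} {t : 𝕜}
    (hP : ∀ i j, HasDerivAt (fun s => P s i j) (P' i j) t)
    (hQ : ∀ i j, HasDerivAt (fun s => Q s i j) (Q' i j) t) (i : l) (j : n) :
    HasDerivAt (fun s => (P s * Q s) i j) ((P' * Q t + P t * Q') i j) t := by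
  simp only [mul_apply, add_apply, ← Finset.sum_add_distrib]
  exact HasDerivAt.fun_sum fun k _ => (hP i k).mul (hQ k j)

theorem hasDerivAt_transpose_mul_apply [NontriviallyNormedField 𝕜] [Fintype m]
    {P : 𝕜 → Matrix m l 𝕜} {Q : 𝕜 → Matrix m n 𝕜} {P' : Matrix m l 𝕜} {Q' : Matrix m n 𝕜} {t : 𝕜}
    (hP : ∀ i j, HasDerivAt (fun s => P s i j) (P' i j) t)
    (hQ : ∀ i j, HasDerivAt (fun s => Q s i j) (Q' i j) t) (i : l) (j : n) :
    HasDerivAt (fun s => ((P s)ᵀ * Q s) i j) ((P'ᵀ * Q t + (P t)ᵀ * Q') i j) t :=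
  hasDerivAt_mul_apply (P := fun s => (P s)ᵀ) (P' := P'ᵀ) (fun i j => hP j i) hQ i j

end Matrix

theorem vec_beta_dynamics_general (h d c n : ℕ)
    (X : Matrix (Fin n) (Fin d) ℝ) (Y : Matrix (Fin n) (Fin c) ℝ)
    (ηa ηw : ℝ)
    (W : ℝ → Matrix (Fin h) (Fin d) ℝ) (A : ℝ → Matrix (Fin h) (Fin c) ℝ)
    (β : ℝ → Matrix (Fin d) (Fin c) ℝ) (hβ : ∀ t, β t = (W t)ᵀ * A t)
    (hA : ∀ t i j, HasDerivAt (fun s => A s i j)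
      ((-ηa • (W t * (Xᵀ * (X * β t - Y)))) i j) t)
    (hW : ∀ t i j, HasDerivAt (fun s => W s i j)
      ((-ηw • (A t * (X * β t - Y)ᵀ * X)) i j) t) :
    ∀ t (p : Fin c × Fin d), HasDerivAt (fun s => β s p.2 p.1)
      (-((((ηw • ((A t)ᵀ * A t)) ⊗ₖ (1 : Matrix (Fin d) (Fin d) ℝ)
          + (1 : Matrix (Fin c) (Fin c) ℝ) ⊗ₖ (ηa • ((W t)ᵀ * W t))) *ᵥ
          fun q : Fin c × Fin d => (Xᵀ * X * β t - Xᵀ * Y) q.2 q.1) p)) t := by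
  intro t p
  have hprod := hasDerivAt_transpose_mul_apply (hW t) (hA t) p.2 p.1
  simp only [← hβ] at hprod
  refine hprod.congr_deriv ?_
  change _ = -((_ *ᵥ vec (Xᵀ * X * β t - Xᵀ * Y)) p)
  rw [kronecker_one_add_one_kronecker_mulVec_vec, vec, ← neg_apply]
  refine congrArg (fun M : Matrix (Fin d) (Fin c) ℝ => M p.2 p.1) ?_
  simp only [Matrix.mul_sub, transpose_smul, transpose_mul, transpose_transpose, smul_mul,
    Matrix.mul_smul, Matrix.sub_mul, Matrix.mul_assoc]
  module

/-- vec(dβ/dt) = -(η_w AᵀA ⊕ η_a WᵀW) vec(XᵀXβ - XᵀY) along the two-layer flow. -/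
theorem vec_beta_dynamics (h d c n : ℕ)
    (X : Matrix (Fin n) (Fin d) ℝ) (Y : Matrix (Fin n) (Fin c) ℝ)
    (ηa ηw : ℝ) (hηa : 0 < ηa) (hηw : 0 < ηw)
    (W : ℝ → Matrix (Fin h) (Fin d) ℝ) (A : ℝ → Matrix (Fin h) (Fin c) ℝ)
    (β : ℝ → Matrix (Fin d) (Fin c) ℝ) (hβ : ∀ t, β t = (W t)ᵀ * A t)
    (hA : ∀ t i j, HasDerivAt (fun s => A s i j)
      ((-ηa • (W t * (Xᵀ * (X * β t - Y)))) i j) t)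
    (hW : ∀ t i j, HasDerivAt (fun s => W s i j)
      ((-ηw • (A t * (X * β t - Y)ᵀ * X)) i j) t) :
    ∀ t (p : Fin c × Fin d), HasDerivAt (fun s => β s p.2 p.1)
      (-((((ηw • ((A t)ᵀ * A t)) ⊗ₖ (1 : Matrix (Fin d) (Fin d) ℝ)
          + (1 : Matrix (Fin c) (Fin c) ℝ) ⊗ₖ (ηa • ((W t)ᵀ * W t))) *ᵥ
          fun q : Fin c × Fin d => (Xᵀ * X * β t - Xᵀ * Y) q.2 q.1) p)) t :=
  vec_beta_dynamics_general h d c n X Y ηa ηw W A β hβ hA hW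
end

section
/- Suppose η_w A Aᵀ - η_a W Wᵀ = δ I_h, and either δ ≤ 0, or δ > 0 and h ≥ c. Then AᵀA = (1/η_w)((δ/2) I_c + √(η_aη_w βᵀβ + (δ²/4) I_c)), with β = WᵀA and √ the principal matrix square root. -/
/-!
Conjugating the balance condition by `A` gives `ηw (AᵀA)² - ηa βᵀβ = δ AᵀA`, so
`S = ηw AᵀA - (δ/2) I` squares to `ηa ηw βᵀβ + (δ²/4) I`, and it remains to show
`S ⪰ 0`; uniqueness of the positive semidefinite square root then identifies `S`.
For `δ ≤ 0` this is clear. For `δ > 0`, `ηw AAᵀ = δ I + ηa WWᵀ` is invertible, so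
`h ≤ rank A ≤ c`, hence `h = c` and `A` is invertible. Then
`ηw AᵀA - δ I = A⁻¹ (ηa WWᵀ) A` is symmetric with the nonnegative spectrum of `ηa WWᵀ`,
so it is positive semidefinite, and so is `S`.
-/

open Matrix

section

open scoped ComplexOrder

/-- The positive semidefinite square root of a positive semidefinite matrix
(as defined in Mathlib of December 2024; removed since). -/
noncomputable def Matrix.PosSemidef.sqrt {n 𝕜 : Type*} [Fintype n] [RCLike 𝕜] [DecidableEq n]
    {A : Matrix n n 𝕜} (hA : A.PosSemidef) : Matrix n n 𝕜 :=
  hA.1.eigenvectorUnitary.1 * diagonal ((↑) ∘ (√·) ∘ hA.1.eigenvalues) *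
    (star hA.1.eigenvectorUnitary : Matrix n n 𝕜)

end

namespace Matrix

open scoped ComplexOrder

variable {n 𝕜 : Type*} [Fintype n] [DecidableEq n] [RCLike 𝕜]

section

open scoped MatrixOrder

theorem PosSemidef.sqrt_eq_cfcSqrt {M : Matrix n n 𝕜} (hM : M.PosSemidef) :
    hM.sqrt = CFC.sqrt M := by
  rw [CFC.sqrt_eq_real_sqrt M hM.nonneg, cfcₙ_eq_cfc (hf0 := Real.sqrt_zero), hM.1.cfc_eq,
    IsHermitian.cfc, Unitary.conjStarAlgAut_apply]
  rfl

theorem PosSemidef.eq_sqrt_of_sq_eq {S M : Matrix n n 𝕜} (hS : S.PosSemidef)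
    (hM : M.PosSemidef) (h : S ^ 2 = M) : S = hM.sqrt := by
  rw [hM.sqrt_eq_cfcSqrt, ← h, CFC.sqrt_sq S hS.nonneg]

end

theorem IsHermitian.posSemidef_of_spectrum_eq {T T' : Matrix n n 𝕜} (hT : T.IsHermitian)
    (hT' : T'.PosSemidef) (h : spectrum 𝕜 T = spectrum 𝕜 T') : T.PosSemidef :=
  posSemidef_iff_isHermitian_and_spectrum_nonneg.mpr
    ⟨hT, h ▸ (posSemidef_iff_isHermitian_and_spectrum_nonneg.mp hT').2⟩

theorem posSemidef_transpose_mul_self {m n : Type*} [Fintype m] [Fintype n] (A : Matrix m n ℝ) :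
    (Aᵀ * A).PosSemidef := by
  simpa using posSemidef_conjTranspose_mul_self A

theorem posSemidef_self_mul_transpose {m n : Type*} [Fintype m] [Fintype n] (A : Matrix m n ℝ) :
    (A * Aᵀ).PosSemidef := by
  simpa using posSemidef_self_mul_conjTranspose A

end Matrix

section Balanced

variable {m n k R : Type*} [Fintype m] [Fintype n] [Fintype k]

theorem transpose_mul_self_sq_of_balanced [CommRing R] [DecidableEq m] {ηa ηw δ : R}
    {A : Matrix m n R} {W : Matrix m k R}
    (hbal : ηw • (A * Aᵀ) - ηa • (W * Wᵀ) = δ • (1 : Matrix m m R)) :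
    ηw • (Aᵀ * A * (Aᵀ * A)) - ηa • ((Wᵀ * A)ᵀ * (Wᵀ * A)) = δ • (Aᵀ * A) := by
  simpa [Matrix.mul_sub, Matrix.sub_mul, Matrix.mul_assoc, transpose_mul] using
    congrArg (fun M => Aᵀ * M * A) hbal

theorem sq_smul_transpose_mul_self_sub_of_balanced [Field R] [CharZero R] [DecidableEq m]
    [DecidableEq n] {ηa ηw δ : R} {A : Matrix m n R} {W : Matrix m k R}
    (hbal : ηw • (A * Aᵀ) - ηa • (W * Wᵀ) = δ • (1 : Matrix m m R)) :
    (ηw • (Aᵀ * A) - (δ / 2) • 1) ^ 2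
      = (ηa * ηw) • ((Wᵀ * A)ᵀ * (Wᵀ * A)) + (δ ^ 2 / 4) • (1 : Matrix n n R) := by
  have key := congrArg (ηw • ·) (transpose_mul_self_sq_of_balanced hbal)
  simp only [smul_sub, smul_smul] at key
  rw [sq]
  simp only [Matrix.sub_mul, Matrix.mul_sub, Matrix.smul_mul, Matrix.mul_smul, Matrix.mul_one,
    Matrix.one_mul]
  linear_combination (norm := module) key

theorem card_le_card_of_isUnit_mul [CommRing R] [StrongRankCondition R] [DecidableEq m]
    {A : Matrix m n R} {B : Matrix n m R} (h : IsUnit (A * B)) :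
    Fintype.card m ≤ Fintype.card n :=
  calc Fintype.card m = (A * B).rank := (rank_of_isUnit _ h).symm
    _ ≤ A.rank := rank_mul_le_left A B
    _ ≤ Fintype.card n := rank_le_card_width A

theorem posDef_mul_transpose_of_balanced [DecidableEq m] {ηa ηw δ : ℝ} (hηa : 0 ≤ ηa)
    (hηw : 0 < ηw) (hδ : 0 < δ) {A : Matrix m n ℝ} {W : Matrix m k ℝ}
    (hbal : ηw • (A * Aᵀ) - ηa • (W * Wᵀ) = δ • (1 : Matrix m m ℝ)) :
    (A * Aᵀ).PosDef := by
  have hpd : (δ • (1 : Matrix m m ℝ) + ηa • (W * Wᵀ)).PosDef :=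
    (PosDef.one.smul hδ).add_posSemidef ((posSemidef_self_mul_transpose W).smul hηa)
  rw [← hbal, sub_add_cancel] at hpd
  simpa [smul_smul, hηw.ne'] using hpd.smul (inv_pos.mpr hηw)

theorem posSemidef_smul_transpose_mul_self_sub_of_balanced_of_isUnit [DecidableEq n]
    {ηa ηw δ : ℝ} (hηa : 0 ≤ ηa) {A : Matrix n n ℝ} (hA : IsUnit A) {W : Matrix n k ℝ}
    (hbal : ηw • (A * Aᵀ) - ηa • (W * Wᵀ) = δ • (1 : Matrix n n ℝ)) :
    (ηw • (Aᵀ * A) - δ • 1).PosSemidef := by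
  have hWW : (ηw • (A * Aᵀ) - δ • 1).PosSemidef := by
    rw [← hbal, sub_sub_cancel]
    exact (posSemidef_self_mul_transpose W).smul hηa
  have hinv : ((hA.unit⁻¹ : (Matrix n n ℝ)ˣ) : Matrix n n ℝ) * A = 1 := hA.val_inv_mul
  have hconj : ((hA.unit⁻¹ : (Matrix n n ℝ)ˣ) : Matrix n n ℝ) * (ηw • (A * Aᵀ) - δ • 1) *
      hA.unit = ηw • (Aᵀ * A) - δ • 1 := by
    simp only [IsUnit.unit_spec, Matrix.mul_sub, Matrix.sub_mul, Matrix.mul_smul, Matrix.smul_mul,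
      Matrix.mul_one, ← Matrix.mul_assoc, hinv, Matrix.one_mul]
  have hT : (ηw • (Aᵀ * A) - δ • 1).IsHermitian :=
    ((posSemidef_transpose_mul_self A).isHermitian.smul (IsSelfAdjoint.all ηw)).sub
      (isHermitian_one.smul (IsSelfAdjoint.all δ))
  exact hT.posSemidef_of_spectrum_eq hWW (hconj ▸ spectrum.units_conjugate')

theorem posSemidef_smul_transpose_mul_self_sub_of_balanced {p q : ℕ} {ηa ηw δ : ℝ}
    (hηa : 0 ≤ ηa) (hηw : 0 < ηw) (hδ : 0 < δ) {A : Matrix (Fin p) (Fin q) ℝ}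
    {W : Matrix (Fin p) k ℝ}
    (hbal : ηw • (A * Aᵀ) - ηa • (W * Wᵀ) = δ • (1 : Matrix (Fin p) (Fin p) ℝ))
    (hqp : q ≤ p) : (ηw • (Aᵀ * A) - δ • 1).PosSemidef := by
  have hunit := (posDef_mul_transpose_of_balanced hηa hηw hδ hbal).isUnit
  obtain rfl : p = q := le_antisymm (by simpa using card_le_card_of_isUnit_mul hunit) hqp
  exact posSemidef_smul_transpose_mul_self_sub_of_balanced_of_isUnit hηa
    (isUnit_of_mul_isUnit_left hunit) hbal

end Balanced

/-- Under the isotropic balance condition, AᵀA = (1/η_w)((δ/2)I + √(η_aη_w βᵀβ + (δ²/4)I)). -/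
theorem AtA_in_terms_of_beta (hdim d c : ℕ) (ηa ηw δ : ℝ) (hηa : 0 < ηa) (hηw : 0 < ηw)
    (A : Matrix (Fin hdim) (Fin c) ℝ) (W : Matrix (Fin hdim) (Fin d) ℝ)
    (β : Matrix (Fin d) (Fin c) ℝ) (hβ : β = Wᵀ * A)
    (hbal : ηw • (A * Aᵀ) - ηa • (W * Wᵀ) = δ • (1 : Matrix (Fin hdim) (Fin hdim) ℝ))
    (hcase : δ ≤ 0 ∨ (0 < δ ∧ c ≤ hdim))
    (hpsd : ((ηa*ηw) • (βᵀ * β) + (δ^2/4) • (1 : Matrix (Fin c) (Fin c) ℝ)).PosSemidef) :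
    Aᵀ * A = (1/ηw) • ((δ/2) • (1 : Matrix (Fin c) (Fin c) ℝ) + hpsd.sqrt) := by
  subst hβ
  have hS : (ηw • (Aᵀ * A) - (δ / 2) • 1).PosSemidef := by
    rcases hcase with hδ | ⟨hδ, hch⟩
    · rw [sub_eq_add_neg, ← neg_smul]
      exact ((posSemidef_transpose_mul_self A).smul hηw.le).add
        (PosSemidef.one.smul (by linarith))
    · convert (posSemidef_smul_transpose_mul_self_sub_of_balanced hηa.le hηw hδ hbal hch).add
        (PosSemidef.one.smul (half_pos hδ).le) using 1
      module
  rw [← hS.eq_sqrt_of_sq_eq hpsd (sq_smul_transpose_mul_self_sub_of_balanced hbal),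
    add_sub_cancel, smul_smul, one_div_mul_cancel hηw.ne', one_smul]
end

section
/- For a depth-(L+1) linear network with square width and isotropic initialization conserved through training — i.e., a aᵀ - W_L W_Lᵀ = δ I_h and W_{l+1}ᵀW_{l+1} = W_l W_lᵀ for all l ∈ [L-1] — the predictor β = (∏_{l=1}^L W_l)ᵀ a satisfies ‖β‖² = ‖a‖²(‖a‖² - δ)^L and β βᵀ = (W_1ᵀW_1)^{L+1} + δ (W_1ᵀW_1)^L. -/
open Matrix

section Aux

variable {n : ℕ}

lemma comm_pow (X : Matrix (Fin n) (Fin n) ℝ) (m : ℕ) :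
    Xᵀ * (X * Xᵀ)^m = (Xᵀ * X)^m * Xᵀ := by
  induction m with
  | zero => simp
  | succ m ih =>
    rw [pow_succ, pow_succ, ← mul_assoc, ih]
    noncomm_ring

lemma comm_pow' (X : Matrix (Fin n) (Fin n) ℝ) (m : ℕ) :
    X * (Xᵀ * X)^m = (X * Xᵀ)^m * X := by
  have := comm_pow Xᵀ m
  simpa using this

lemma dot_mulVec_self (M : Matrix (Fin n) (Fin n) ℝ) (u v : Fin n → ℝ) :
    (M *ᵥ u) ⬝ᵥ v = u ⬝ᵥ (Mᵀ *ᵥ v) := by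
  simp [mulVec, dotProduct, transpose, Finset.sum_mul, Finset.mul_sum]
  rw [Finset.sum_comm]
  congr 1; ext i; congr 1; ext j; ring

lemma vecMulVec_mulVec_eq (M : Matrix (Fin n) (Fin n) ℝ) (u v : Fin n → ℝ) :
    vecMulVec (M *ᵥ u) (M *ᵥ v) = M * vecMulVec u v * Mᵀ := by
  ext i j
  simp [vecMulVec_apply, mul_apply, mulVec, dotProduct, transpose,
    Finset.sum_mul, Finset.mul_sum]
  congr 1; ext k; congr 1; ext l; ring

end Aux

/-- For a deep linear network with square width and isotropic initialization,
‖β‖² = ‖a‖²(‖a‖² - δ)^L and ββᵀ = (W₁ᵀW₁)^{L+1} + δ(W₁ᵀW₁)^L. -/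
theorem deep_linear_beta_identities (hdim L : ℕ) (hL : 0 < L) (δ : ℝ)
    (W : ℕ → Matrix (Fin hdim) (Fin hdim) ℝ) (a : Fin hdim → ℝ)
    (hlast : Matrix.vecMulVec a a - W (L-1) * (W (L-1))ᵀ
      = δ • (1 : Matrix (Fin hdim) (Fin hdim) ℝ))
    (hbal : ∀ l, l + 1 < L → (W (l+1))ᵀ * W (l+1) = W l * (W l)ᵀ)
    (β : Fin hdim → ℝ)
    (hβ : β = ((List.range L).map (fun l => (W l)ᵀ)).prod *ᵥ a) :
    β ⬝ᵥ β = (a ⬝ᵥ a) * (a ⬝ᵥ a - δ)^L ∧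
    Matrix.vecMulVec β β = ((W 0)ᵀ * W 0)^(L+1) + δ • ((W 0)ᵀ * W 0)^L := by
  obtain ⟨K, rfl⟩ : ∃ K, L = K + 1 := ⟨L - 1, (Nat.succ_pred_eq_of_pos hL).symm⟩
  set P : ℕ → Matrix (Fin hdim) (Fin hdim) ℝ :=
    fun k => ((List.range k).map (fun l => (W l)ᵀ)).prod with hP
  have hPsucc : ∀ k, P (k+1) = P k * (W k)ᵀ := by
    intro k
    simp [hP, List.range_succ]
  have hP1 : P 1 = (W 0)ᵀ := by simp [hP, List.range_succ]
  set G := (W 0)ᵀ * W 0 with hG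
  -- key 1 : P (k+1) * (A k)^m * (P (k+1))ᵀ = G^(k+1+m)
  have key1 : ∀ k, k < K + 1 → ∀ m,
      P (k+1) * (W k * (W k)ᵀ)^m * (P (k+1))ᵀ = G^(k+1+m) := by
    intro k hk
    induction k with
    | zero =>
      intro m
      rw [hP1]
      rw [comm_pow, mul_assoc, transpose_transpose, ← hG, ← pow_succ]
      ring_nf
    | succ k ih =>
      intro m
      have hk' : k < K + 1 := Nat.lt_of_succ_lt hk
      rw [hPsucc (k+1), transpose_mul, transpose_transpose]
      have step : (W (k+1))ᵀ * (W (k+1) * (W (k+1))ᵀ)^m * W (k+1)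
          = (W k * (W k)ᵀ)^(m+1) := by
        rw [comm_pow, hbal k hk, mul_assoc, ← hbal k hk, ← pow_succ]
      calc P (k + 1) * (W (k+1))ᵀ * (W (k + 1) * (W (k + 1))ᵀ) ^ m *
            (W (k + 1) * (P (k + 1))ᵀ)
          = P (k + 1) * ((W (k+1))ᵀ * (W (k + 1) * (W (k + 1))ᵀ) ^ m * W (k + 1)) *
            (P (k + 1))ᵀ := by noncomm_ring
        _ = P (k + 1) * (W k * (W k)ᵀ)^(m+1) * (P (k + 1))ᵀ := by rw [step]
        _ = G ^ (k + 1 + (m + 1)) := ih hk' (m+1)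
        _ = G ^ (k + 1 + 1 + m) := by ring_nf
  -- key 2 : (P (k+1))ᵀ * P (k+1) = (A k)^(k+1)
  have key2 : ∀ k, k < K + 1 → (P (k+1))ᵀ * P (k+1) = (W k * (W k)ᵀ)^(k+1) := by
    intro k hk
    induction k with
    | zero => rw [hP1]; simp
    | succ k ih =>
      have hk' : k < K + 1 := Nat.lt_of_succ_lt hk
      rw [hPsucc (k+1), transpose_mul, transpose_transpose]
      calc W (k+1) * (P (k+1))ᵀ * (P (k+1) * (W (k+1))ᵀ)
          = W (k+1) * ((P (k+1))ᵀ * P (k+1)) * (W (k+1))ᵀ := by noncomm_ring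
        _ = W (k+1) * (W k * (W k)ᵀ)^(k+1) * (W (k+1))ᵀ := by rw [ih hk']
        _ = W (k+1) * ((W (k+1))ᵀ * W (k+1))^(k+1) * (W (k+1))ᵀ := by
            rw [hbal k hk]
        _ = (W (k+1) * (W (k+1))ᵀ)^(k+1) * (W (k+1) * (W (k+1))ᵀ) := by
            rw [comm_pow']; noncomm_ring
        _ = (W (k+1) * (W (k+1))ᵀ)^(k+1+1) := (pow_succ _ _).symm
  have hA : W K * (W K)ᵀ = vecMulVec a a - δ • (1 : Matrix (Fin hdim) (Fin hdim) ℝ) := by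
    have h := hlast
    simp only [Nat.add_sub_cancel] at h
    rw [sub_eq_iff_eq_add] at h
    rw [h]; abel
  have hAa : (W K * (W K)ᵀ) *ᵥ a = (a ⬝ᵥ a - δ) • a := by
    rw [hA, Matrix.sub_mulVec, sub_smul]
    congr 1
    · ext i
      simp only [mulVec, dotProduct, vecMulVec_apply, Pi.smul_apply, smul_eq_mul]
      rw [Finset.sum_mul]
      exact Finset.sum_congr rfl fun x _ => by ring
    · rw [Matrix.smul_mulVec, Matrix.one_mulVec]
  have hAm : ∀ m, (W K * (W K)ᵀ)^m *ᵥ a = (a ⬝ᵥ a - δ)^m • a := by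
    intro m
    induction m with
    | zero => simp
    | succ m ih =>
      rw [pow_succ, ← Matrix.mulVec_mulVec, hAa, Matrix.mulVec_smul, ih,
        smul_smul, pow_succ]
      ring_nf
  constructor
  · rw [hβ]
    rw [show ((List.range (K+1)).map (fun l => (W l)ᵀ)).prod = P (K+1) from rfl]
    rw [dot_mulVec_self, Matrix.mulVec_mulVec, key2 K (Nat.lt_succ_self K), hAm]
    rw [dotProduct_smul, smul_eq_mul]
    ring
  · rw [hβ]
    rw [show ((List.range (K+1)).map (fun l => (W l)ᵀ)).prod = P (K+1) from rfl]
    rw [vecMulVec_mulVec_eq]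
    have haa : vecMulVec a a = W K * (W K)ᵀ + δ • (1 : Matrix (Fin hdim) (Fin hdim) ℝ) := by
      rw [hA]; abel
    rw [haa, mul_add, add_mul]
    have e1 : P (K+1) * (W K * (W K)ᵀ) * (P (K+1))ᵀ = G^(K+1+1) := by
      have := key1 K (Nat.lt_succ_self K) 1
      simpa using this
    have e0 : P (K+1) * (P (K+1))ᵀ = G^(K+1) := by
      have := key1 K (Nat.lt_succ_self K) 0
      simpa using this
    rw [Matrix.mul_smul, mul_one, Matrix.smul_mul]
    rw [e1, e0]
end
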